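/- (Type A₂ has exactly 5 cluster variables and 5 clusters.) Let F = Frac(ℚ[x₁,x₂]) with canonical generators x₁, x₂, let B = [[0,1],[−1,0]] (the quiver 1 → 2), and consider the initial seed ((x₁,x₂), B). Then the set of all cluster variables (entries of seeds reachable from the initial seed by finite sequences of seed mutations) is exactly the 5-element set {x₁, x₂, (1+x₂)/x₁, (1+x₁+x₂)/(x₁x₂), (1+x₁)/x₂}, and the set of all clusters (the 2-element sets of entries of reachable seeds) has exactly 5 elements, namely {x₁,x₂}, {x₂,(1+x₂)/x₁}, {(1+x₂)/x₁,(1+x₁+x₂)/(x₁x₂)}, {(1+x₁+x₂)/(x₁x₂),(1+x₁)/x₂}, {(1+x₁)/x₂,x₁}. -/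

import Mathlib

open scoped BigOperators

/-- The field `F = Frac(ℚ[x₁,…,xₙ])` of rational functions in `n` variables over `ℚ`. -/
abbrev F (n : ℕ) := FractionRing (MvPolynomial (Fin n) ℚ)

/-- Fomin–Zelevinsky matrix mutation of a skew-symmetric integer matrix at index `i`. -/
def mutate {n : ℕ} (B : Matrix (Fin n) (Fin n) ℤ) (i : Fin n) : Matrix (Fin n) (Fin n) ℤ :=
  Matrix.of fun j k =>
    if j = i ∨ k = i then -B j k
    else B j k + max (B j i) 0 * max (B i k) 0 - max (-B j i) 0 * max (-B i k) 0

/-- Seed mutation at index `i`: the `i`-th cluster variable `yᵢ` is replaced by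
`(∏ⱼ yⱼ^{max(bⱼᵢ,0)} + ∏ⱼ yⱼ^{max(−bⱼᵢ,0)}) / yᵢ`, and `B` is mutated. -/
noncomputable def seedMutate {n : ℕ}
    (s : (Fin n → F n) × Matrix (Fin n) (Fin n) ℤ) (i : Fin n) :
    (Fin n → F n) × Matrix (Fin n) (Fin n) ℤ :=
  (Function.update s.1 i
      ((∏ j, s.1 j ^ (max (s.2 j i) 0).toNat + ∏ j, s.1 j ^ (max (-s.2 j i) 0).toNat) / s.1 i),
    mutate s.2 i)

/-- The canonical generators `x₁, …, xₙ` of `F n`. -/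
noncomputable def X {n : ℕ} (i : Fin n) : F n :=
  algebraMap (MvPolynomial (Fin n) ℚ) (F n) (MvPolynomial.X i)

/-- A seed is reachable from `s` if it is obtained by a finite sequence of seed mutations. -/
def Reachable {n : ℕ} (s t : (Fin n → F n) × Matrix (Fin n) (Fin n) ℤ) : Prop :=
  Relation.ReflTransGen (fun a b => ∃ i, b = seedMutate a i) s t

/-!
In rank 2 with `B = ±[[0, 1], [-1, 0]]` every mutation flips the sign of `B` and replaces one
variable according to the exchange relation `x_{m-1} x_{m+1} = 1 + x_m`. The sequence this
recurrence generates from `x_0 = x₁`, `x_1 = x₂` has period 5 (Lyness), so with indices in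
`Fin 5` the ten seeds `((x_m, x_{m+1}), B)` and `((x_{m+1}, x_m), -B)` are closed under mutation,
and all of them are reached because two mutations take `((x_m, x_{m+1}), B)` to
`((x_{m+2}, x_{m+3}), B)`. The five variables are distinct because at `(x₁, x₂) = (2, 4)` they take
the values `2, 4, 5/2, 7/8, 3/4`.
-/

section FractionRing

variable {R K L : Type*} [CommRing R] [Field K] [Algebra R K] [IsFractionRing R K] [Field L]
  (φ : R →+* L)

theorem IsFractionRing.algebraMap_ne_zero_of_map_ne_zero {a : R} (ha : φ a ≠ 0) :
    algebraMap R K a ≠ 0 := by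
  rw [Ne, IsFractionRing.to_map_eq_zero_iff]
  rintro rfl
  exact ha (map_zero φ)

theorem IsFractionRing.div_ne_div_of_map {a b c d : R} (hb : φ b ≠ 0) (hd : φ d ≠ 0)
    (h : φ a / φ b ≠ φ c / φ d) :
    algebraMap R K a / algebraMap R K b ≠ algebraMap R K c / algebraMap R K d := by
  rw [Ne, div_eq_div_iff (algebraMap_ne_zero_of_map_ne_zero φ hb)
    (algebraMap_ne_zero_of_map_ne_zero φ hd), ← map_mul, ← map_mul,
    (IsFractionRing.injective R K).eq_iff]
  contrapose! h
  rw [div_eq_div_iff hb hd, ← map_mul, ← map_mul, h]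

end FractionRing

theorem X_ne_zero {n : ℕ} (i : Fin n) : (X i : F n) ≠ 0 :=
  (map_ne_zero_iff _ (IsFractionRing.injective _ _)).mpr (MvPolynomial.X_ne_zero i)

theorem pow_max_neg_toNat_add_pow_max_toNat {M : Type*} [Semiring M] (v : M) (c : ℤ) :
    v ^ (max (-c) 0).toNat + v ^ (max c 0).toNat = 1 + v ^ c.natAbs := by
  obtain ⟨k, rfl | rfl⟩ := Int.eq_nat_or_neg c <;> simp [add_comm]

abbrev rank2Matrix (c : ℤ) : Matrix (Fin 2) (Fin 2) ℤ := !![0, c; -c, 0]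

theorem mutate_rank2Matrix (c : ℤ) (i : Fin 2) : mutate (rank2Matrix c) i = rank2Matrix (-c) := by
  ext j k
  fin_cases i <;> fin_cases j <;> fin_cases k <;> simp [mutate, mul_comm]

theorem seedMutate_rank2_zero (u v : F 2) (c : ℤ) :
    seedMutate (![u, v], rank2Matrix c) 0 = (![(1 + v ^ c.natAbs) / u, v], rank2Matrix (-c)) := by
  rw [seedMutate, mutate_rank2Matrix, ← pow_max_neg_toNat_add_pow_max_toNat]
  congr 1
  ext j
  fin_cases j <;> simp [Fin.prod_univ_two]

theorem seedMutate_rank2_one (u v : F 2) (c : ℤ) :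
    seedMutate (![u, v], rank2Matrix c) 1 = (![u, (1 + u ^ c.natAbs) / v], rank2Matrix (-c)) := by
  rw [seedMutate, mutate_rank2Matrix, ← pow_max_neg_toNat_add_pow_max_toNat, add_comm]
  congr 1
  ext j
  fin_cases j <;> simp [Fin.prod_univ_two]

namespace TypeA2

noncomputable def num : Fin 5 → MvPolynomial (Fin 2) ℚ :=
  ![.X 0, .X 1, 1 + .X 1, 1 + .X 0 + .X 1, 1 + .X 0]

noncomputable def den : Fin 5 → MvPolynomial (Fin 2) ℚ :=
  ![1, 1, .X 0, .X 0 * .X 1, .X 1]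

noncomputable def var (m : Fin 5) : F 2 :=
  algebraMap _ (F 2) (num m) / algebraMap _ (F 2) (den m)

theorem var_eq :
    var = ![X 0, X 1, (1 + X 1) / X 0, (1 + X 0 + X 1) / (X 0 * X 1), (1 + X 0) / X 1] := by
  ext m
  fin_cases m <;> simp [var, num, den, X]

theorem var_sub_one_mul_var_add_one (m : Fin 5) :
    var (m - 1) * var (m + 1) = 1 + var m := by
  have h0 := X_ne_zero (0 : Fin 2)
  have h1 := X_ne_zero (1 : Fin 2)
  rw [var_eq]
  fin_cases m <;>
    simp only [Fin.isValue, Fin.zero_eta, Fin.mk_one, Fin.reduceFinMk, Fin.reduceAdd, Fin.reduceSub,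
      zero_add, zero_sub, sub_self, Matrix.cons_val, Matrix.cons_val_zero, Matrix.cons_val_one] <;>
    field_simp <;> ring

theorem eval_den_ne_zero (m : Fin 5) : MvPolynomial.eval ![2, 4] (den m) ≠ 0 := by
  fin_cases m <;> simp [den]

theorem var_ne_zero (m : Fin 5) : var m ≠ 0 := by
  refine div_ne_zero ?_ (IsFractionRing.algebraMap_ne_zero_of_map_ne_zero _ (eval_den_ne_zero m))
  refine IsFractionRing.algebraMap_ne_zero_of_map_ne_zero (MvPolynomial.eval ![2, 4]) ?_
  fin_cases m <;> norm_num [num]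

theorem var_injective : Function.Injective var := by
  intro m k h
  by_contra hmk
  refine IsFractionRing.div_ne_div_of_map (MvPolynomial.eval ![2, 4]) (eval_den_ne_zero m)
    (eval_den_ne_zero k) ?_ h
  fin_cases m <;> fin_cases k <;> first | contradiction | norm_num [num, den]

theorem var_add_one (m : Fin 5) : var (m + 1) = (1 + var m) / var (m - 1) := by
  rw [eq_div_iff (var_ne_zero _), mul_comm, var_sub_one_mul_var_add_one]

theorem var_sub_one (m : Fin 5) : var (m - 1) = (1 + var m) / var (m + 1) := by
  rw [eq_div_iff (var_ne_zero _), var_sub_one_mul_var_add_one]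

noncomputable def seedPos (m : Fin 5) : (Fin 2 → F 2) × Matrix (Fin 2) (Fin 2) ℤ :=
  (![var m, var (m + 1)], rank2Matrix 1)

noncomputable def seedNeg (m : Fin 5) : (Fin 2 → F 2) × Matrix (Fin 2) (Fin 2) ℤ :=
  (![var (m + 1), var m], rank2Matrix (-1))

theorem seedMutate_seedPos_zero (m : Fin 5) : seedMutate (seedPos m) 0 = seedNeg (m + 1) := by
  rw [seedPos, seedMutate_rank2_zero, seedNeg, var_add_one (m + 1), add_sub_cancel_right]
  simp

theorem seedMutate_seedPos_one (m : Fin 5) : seedMutate (seedPos m) 1 = seedNeg (m - 1) := by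
  rw [seedPos, seedMutate_rank2_one, seedNeg, sub_add_cancel, var_sub_one]
  simp

theorem seedMutate_seedNeg_zero (m : Fin 5) : seedMutate (seedNeg m) 0 = seedPos (m - 1) := by
  rw [seedNeg, seedMutate_rank2_zero, seedPos, sub_add_cancel, var_sub_one]
  simp

theorem seedMutate_seedNeg_one (m : Fin 5) : seedMutate (seedNeg m) 1 = seedPos (m + 1) := by
  rw [seedNeg, seedMutate_rank2_one, seedPos, var_add_one (m + 1), add_sub_cancel_right]
  simp

theorem initial_eq_seedPos_zero :
    (((fun i => X i) : Fin 2 → F 2), !![0, 1; -1, 0]) = seedPos 0 := by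
  rw [seedPos, var_eq]
  congr 1
  ext i
  fin_cases i <;> rfl

theorem eq_seedPos_or_eq_seedNeg_of_reachable {s} (h : Reachable (seedPos 0) s) :
    ∃ m, s = seedPos m ∨ s = seedNeg m := by
  induction h with
  | refl => exact ⟨0, .inl rfl⟩
  | tail _ hstep ih =>
    obtain ⟨i, rfl⟩ := hstep
    obtain ⟨m, rfl | rfl⟩ := ih <;> fin_cases i
    exacts [⟨m + 1, .inr (seedMutate_seedPos_zero m)⟩, ⟨m - 1, .inr (seedMutate_seedPos_one m)⟩,
      ⟨m - 1, .inl (seedMutate_seedNeg_zero m)⟩, ⟨m + 1, .inl (seedMutate_seedNeg_one m)⟩]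

theorem reachable_seedPos (m : Fin 5) : Reachable (seedPos 0) (seedPos m) := by
  have nsmul_two : ∀ k : ℕ, Reachable (seedPos 0) (seedPos (k • 2)) := by
    intro k
    induction k with
    | zero => exact Relation.ReflTransGen.refl
    | succ k ih =>
      refine (ih.tail ⟨0, (seedMutate_seedPos_zero _).symm⟩).tail ⟨1, ?_⟩
      rw [seedMutate_seedNeg_one, succ_nsmul, add_assoc]
      rfl
  have hm : m = (3 * m.val) • 2 := by
    fin_cases m <;> rfl
  exact hm ▸ nsmul_two _

def cluster (m : Fin 5) : Set (F 2) := {var m, var (m + 1)}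

theorem cluster_injective : Function.Injective cluster := by
  intro m k h
  rcases Set.pair_eq_pair_iff.mp h with ⟨hmk, -⟩ | ⟨hmk, hkm⟩
  · exact var_injective hmk
  · have hm := var_injective hmk
    have hk := var_injective hkm
    subst hm
    revert hk
    fin_cases k <;> decide

theorem setOf_clusterVariable_eq_range_var :
    {v : F 2 | ∃ s, Reachable (seedPos 0) s ∧ ∃ j, v = s.1 j} = Set.range var := by
  ext v
  constructor
  · rintro ⟨s, hs, j, rfl⟩
    obtain ⟨m, rfl | rfl⟩ := eq_seedPos_or_eq_seedNeg_of_reachable hs <;> fin_cases j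
    exacts [⟨m, rfl⟩, ⟨m + 1, rfl⟩, ⟨m + 1, rfl⟩, ⟨m, rfl⟩]
  · rintro ⟨m, rfl⟩
    exact ⟨seedPos m, reachable_seedPos m, 0, rfl⟩

theorem setOf_cluster_eq_range_cluster :
    {C : Set (F 2) | ∃ s, Reachable (seedPos 0) s ∧ C = Set.range s.1} = Set.range cluster := by
  ext C
  constructor
  · rintro ⟨s, hs, rfl⟩
    obtain ⟨m, rfl | rfl⟩ := eq_seedPos_or_eq_seedNeg_of_reachable hs
    · exact ⟨m, (Matrix.range_cons_cons_empty _ _ _).symm⟩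
    · exact ⟨m, by rw [seedNeg, Matrix.range_cons_cons_empty, Set.pair_comm, cluster]⟩
  · rintro ⟨m, rfl⟩
    exact ⟨seedPos m, reachable_seedPos m, (Matrix.range_cons_cons_empty _ _ _).symm⟩

theorem range_var :
    Set.range var = {X 0, X 1, (1 + X 1) / X 0, (1 + X 0 + X 1) / (X 0 * X 1), (1 + X 0) / X 1} := by
  simp only [var_eq, Matrix.range_cons, Matrix.range_empty, Set.union_empty, Set.singleton_union]

theorem range_cluster :
    Set.range cluster = {{X 0, X 1}, {X 1, (1 + X 1) / X 0},
      {(1 + X 1) / X 0, (1 + X 0 + X 1) / (X 0 * X 1)},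
      {(1 + X 0 + X 1) / (X 0 * X 1), (1 + X 0) / X 1}, {(1 + X 0) / X 1, X 0}} := by
  have hcluster : cluster = ![{X 0, X 1}, {X 1, (1 + X 1) / X 0},
      {(1 + X 1) / X 0, (1 + X 0 + X 1) / (X 0 * X 1)},
      {(1 + X 0 + X 1) / (X 0 * X 1), (1 + X 0) / X 1}, {(1 + X 0) / X 1, X 0}] := by
    ext m : 1
    fin_cases m <;> simp [cluster, var_eq]
  simp only [hcluster, Matrix.range_cons, Matrix.range_empty, Set.union_empty, Set.singleton_union]

end TypeA2

/-- Type `A₂` (the quiver `1 → 2`) has exactly `5` cluster variables and exactly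
`5` clusters, explicitly listed. -/
theorem typeA2_five_cluster_variables :
    {v : F 2 | ∃ s : (Fin 2 → F 2) × Matrix (Fin 2) (Fin 2) ℤ,
        Reachable ((fun i => X i), !![0, 1; -1, 0]) s ∧ ∃ j : Fin 2, v = s.1 j}
      = {X 0, X 1, (1 + X 1) / X 0, (1 + X 0 + X 1) / (X 0 * X 1), (1 + X 0) / X 1} ∧
    Set.ncard {v : F 2 | ∃ s : (Fin 2 → F 2) × Matrix (Fin 2) (Fin 2) ℤ,
        Reachable ((fun i => X i), !![0, 1; -1, 0]) s ∧ ∃ j : Fin 2, v = s.1 j} = 5 ∧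
    {C : Set (F 2) | ∃ s : (Fin 2 → F 2) × Matrix (Fin 2) (Fin 2) ℤ,
        Reachable ((fun i => X i), !![0, 1; -1, 0]) s ∧ C = Set.range s.1}
      = {{X 0, X 1}, {X 1, (1 + X 1) / X 0},
          {(1 + X 1) / X 0, (1 + X 0 + X 1) / (X 0 * X 1)},
          {(1 + X 0 + X 1) / (X 0 * X 1), (1 + X 0) / X 1},
          {(1 + X 0) / X 1, X 0}} ∧
    Set.ncard {C : Set (F 2) | ∃ s : (Fin 2 → F 2) × Matrix (Fin 2) (Fin 2) ℤ,
        Reachable ((fun i => X i), !![0, 1; -1, 0]) s ∧ C = Set.range s.1} = 5 := by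
  rw [TypeA2.initial_eq_seedPos_zero, TypeA2.setOf_clusterVariable_eq_range_var,
    TypeA2.setOf_cluster_eq_range_cluster, Set.ncard_range_of_injective TypeA2.var_injective,
    Set.ncard_range_of_injective TypeA2.cluster_injective]
  exact ⟨TypeA2.range_var, Nat.card_fin 5, TypeA2.range_cluster, Nat.card_fin 5⟩
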